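/- Let m ∈ (1/2)ℤ_{>0} and s ∈ (1/2)ℤ. For every τ with Im τ > 0 and all u, v ∈ ℂ: (a) if a, b ∈ ℤ then φ^{±[m;s]}_add(τ, u + a, v + b) = e^{2πi s (b−a)} φ^{±[m;s]}_add(τ, u, v); (b) if m ∈ ℤ and a, b ∈ (1/2)ℤ satisfy a + b ∈ ℤ, then φ^{±[m;s]}_add(τ, u + a, v + b) = e^{2πi s (b−a)} φ^{±[m;s]}_add(τ, u, v); (c) if m ∉ ℤ and a, b ∈ 1/2 + ℤ, then φ^{±[m;s]}_add(τ, u + a, v + b) = e^{2πi s (b−a)} φ^{∓[m;s]}_add(τ, u, v). -/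

import Mathlib

noncomputable section

open Complex

/-- `mexp w = e^{2πi w}`. -/
def mexp (w : ℂ) : ℂ := Complex.exp (2 * (Real.pi : ℂ) * Complex.I * w)

/-- The signed mock theta function `Φ^{sgn[m;s]}(τ,z₁,z₂)`. -/
def PhiS (sgn : ℂ) (m s : ℝ) (τ z₁ z₂ : ℂ) : ℂ :=
  ∑' n : ℤ, sgn ^ n *
    mexp ((m : ℂ) * n * (z₁ + z₂) + (s : ℂ) * z₁ + τ * ((m : ℂ) * n ^ 2 + (s : ℂ) * n)) /
    (1 - mexp (z₁ + n * τ))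

/-- The signed theta function `Θ^{sgn}_{j,m}(τ,z)`. -/
def ThetaS (sgn : ℂ) (j m : ℝ) (τ z : ℂ) : ℂ :=
  ∑' n : ℤ, sgn ^ n *
    mexp ((m : ℂ) * z * ((n : ℂ) + ((j / (2 * m) : ℝ) : ℂ)) +
      τ * (m : ℂ) * ((n : ℂ) + ((j / (2 * m) : ℝ) : ℂ)) ^ 2)

/-- `E(x) = 2∫₀ˣ e^{-πu²} du`. -/
def Efun (x : ℝ) : ℝ := 2 * ∫ u in (0:ℝ)..x, Real.exp (-Real.pi * u ^ 2)

/-- `ψ_{m,n}(τ,z) = (n - 2m Im z / Im τ) √(Im τ / m)`. -/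
def psiMN (m n : ℝ) (τ z : ℂ) : ℝ := (n - 2 * m * z.im / τ.im) * Real.sqrt (τ.im / m)

/-- The real-analytic correction `R^{sgn}_{j,m}(τ,z)`; the summation variable `n ∈ j + 2mℤ`
is written as `n = j + 2mk`, `k ∈ ℤ`, so that `(±1)^{(n-j)/(2m)} = sgn^k`. -/
def RS (sgn : ℂ) (j m : ℝ) (τ z : ℂ) : ℂ :=
  ∑' k : ℤ, sgn ^ k *
    (((Real.sign (j + 2 * m * k - 1 / 2 - j + 2 * m) -
        Efun (psiMN m (j + 2 * m * k) τ z) : ℝ)) : ℂ) *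
    Complex.exp (-(Real.pi : ℂ) * Complex.I * (((j + 2 * m * k : ℝ)) : ℂ) ^ 2 * τ / (2 * (m : ℂ))
      + 2 * (Real.pi : ℂ) * Complex.I * (((j + 2 * m * k : ℝ)) : ℂ) * z)

/-- The modifier `Φ^{sgn[m;s]}_add`; the summation variable `j ∈ s + ℤ`, `s ≤ j < s + 2m`
is written as `j = s + i`, `0 ≤ i < ⌈2m⌉`. -/
def PhiAddS (sgn : ℂ) (m s : ℝ) (τ z₁ z₂ : ℂ) : ℂ :=
  ∑ i ∈ Finset.range ⌈2 * m⌉₊,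
    RS sgn (s + i) m τ ((z₁ - z₂) / 2) * ThetaS sgn (s + i) m τ (z₁ + z₂)

/-- The modified (signed) mock theta function `Φ̃^{sgn[m;s]}`. -/
def PhiTilde (sgn : ℂ) (m s : ℝ) (τ z₁ z₂ : ℂ) : ℂ :=
  PhiS sgn m s τ z₁ z₂ - (1 / 2) * PhiAddS sgn m s τ z₁ z₂

end

/-- The modifier in the coordinates `u = -(z₁+z₂)/2`, `v = (z₁-z₂)/2`:
`φ^{±[m;s]}_add(τ,u,v) = -(1/2) Σ_{k ∈ s+ℤ, s ≤ k < s+2m} R^{±}_{k,m}(τ,v) Θ^{±}_{-k,m}(τ,2u)`,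
where `k = s + i`, `0 ≤ i < ⌈2m⌉`. -/
noncomputable def phiAddUV (sgn : ℂ) (m s : ℝ) (τ u v : ℂ) : ℂ :=
  -(1 / 2) * ∑ i ∈ Finset.range ⌈2 * m⌉₊,
    RS sgn (s + i) m τ v * ThetaS sgn (-(s + i)) m τ (2 * u)


/-!
Shifting `v` by a real `b` multiplies the term of `R_{j,m}` with index `j + 2mk` by
`e^{2πi(j+2mk)b}` and leaves `ψ`, which only sees `Im v`, unchanged; shifting `2u` by `2a`
multiplies the `n`-th term of `Θ_{-j,m}` by `e^{2πi(2man - ja)}`. The `k`- and `n`-dependent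
factors are absorbed into the sign, `sgn ↦ sgn · e^{2πi·2mb}` (the two agree once
`2m(b - a) ∈ ℤ`), and the remaining phase `e^{2πij(b-a)}` equals `e^{2πis(b-a)}` for `j ∈ s + ℤ`
once `b - a ∈ ℤ`. For `m = m2/2` and `2b ∈ ℤ` the new sign is `sgn · (-1)^{m2·2b}`.
-/

lemma mexp_add (x y : ℂ) : mexp (x + y) = mexp x * mexp y := by
  simp only [mexp, mul_add, Complex.exp_add]

lemma mexp_intCast (n : ℤ) : mexp n = 1 := by
  rw [mexp, mul_comm]
  exact Complex.exp_int_mul_two_pi_mul_I n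

lemma mexp_intCast_div_two (n : ℤ) : mexp (n / 2) = (-1) ^ n := by
  rw [mexp, show 2 * (Real.pi : ℂ) * Complex.I * (n / 2) = n * (Real.pi * Complex.I) by ring,
    Complex.exp_int_mul, Complex.exp_pi_mul_I]

lemma mexp_intCast_mul (n : ℤ) (w : ℂ) : mexp (n * w) = mexp w ^ n := by
  rw [mexp, mexp, ← Complex.exp_int_mul]
  ring_nf

lemma mexp_natCast_mul (n : ℕ) (w : ℂ) : mexp (n * w) = mexp w ^ n := by
  simpa using mexp_intCast_mul n w

lemma mexp_eq_of_sub_eq_intCast {x y : ℂ} {n : ℤ} (h : x - y = n) : mexp x = mexp y := by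
  rw [← sub_add_cancel x y, h, add_comm, mexp_add, mexp_intCast, mul_one]

lemma RS_add_of_im_eq_zero (sgn : ℂ) (j m : ℝ) (τ z : ℂ) {c : ℂ} (hc : c.im = 0) :
    RS sgn j m τ (z + c) = mexp (j * c) * RS (sgn * mexp (2 * m * c)) j m τ z := by
  unfold RS
  rw [← tsum_mul_left]
  refine tsum_congr fun k => ?_
  have hψ : psiMN m (j + 2 * m * k) τ (z + c) = psiMN m (j + 2 * m * k) τ z := by
    simp [psiMN, hc]
  set n : ℂ := ((j + 2 * m * k : ℝ) : ℂ) with hn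
  set A : ℂ := -(Real.pi : ℂ) * Complex.I * n ^ 2 * τ / (2 * (m : ℂ))
  have hexp : Complex.exp (A + 2 * (Real.pi : ℂ) * Complex.I * n * (z + c)) =
      Complex.exp (A + 2 * (Real.pi : ℂ) * Complex.I * n * z) *
        (mexp (j * c) * mexp (2 * m * c) ^ k) := by
    rw [← mexp_intCast_mul, ← mexp_add]
    unfold mexp
    rw [← Complex.exp_add, hn]
    push_cast
    ring_nf
  rw [hψ, hexp, mul_zpow]
  ring

lemma ThetaS_add {m : ℝ} (hm : m ≠ 0) (sgn : ℂ) (j : ℝ) (τ z c : ℂ) :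
    ThetaS sgn j m τ (z + c) = mexp (j * c / 2) * ThetaS (sgn * mexp (m * c)) j m τ z := by
  unfold ThetaS
  rw [← tsum_mul_left]
  refine tsum_congr fun n => ?_
  set α : ℂ := ((j / (2 * m) : ℝ) : ℂ) with hα
  have hmα : (m : ℂ) * c * α = j * c / 2 := by
    have : (m : ℂ) ≠ 0 := Complex.ofReal_ne_zero.mpr hm
    rw [hα]
    push_cast
    field_simp
  have hsplit : (m : ℂ) * (z + c) * (n + α) + τ * m * (n + α) ^ 2 =
      ((m : ℂ) * z * (n + α) + τ * m * (n + α) ^ 2) + (n * (m * c) + m * c * α) := by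
    ring
  rw [hsplit, mexp_add _ (_ + _), mexp_add ((n : ℂ) * _), mexp_intCast_mul, hmα, mul_zpow]
  ring

lemma phiAddUV_add {m : ℝ} (hm : m ≠ 0) (sgn : ℂ) (s : ℝ) (τ u v : ℂ) {cu cv : ℂ}
    (hcv : cv.im = 0) (hphase : mexp (cv - cu) = 1)
    (hsign : mexp (2 * m * cu) = mexp (2 * m * cv)) :
    phiAddUV sgn m s τ (u + cu) (v + cv) =
      mexp (s * (cv - cu)) * phiAddUV (sgn * mexp (2 * m * cv)) m s τ u v := by
  unfold phiAddUV
  rw [mul_left_comm (mexp _), Finset.mul_sum _ _ (mexp _)]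
  refine congrArg _ (Finset.sum_congr rfl fun i _ => ?_)
  have hTheta_sign : mexp (m * (2 * cu)) = mexp (2 * m * cv) := by
    rw [← hsign]
    ring_nf
  have hphase_i : mexp (((s + i : ℝ) : ℂ) * cv) * mexp (((-(s + i) : ℝ) : ℂ) * (2 * cu) / 2) =
      mexp (s * (cv - cu)) := by
    rw [← mexp_add, show ((s + i : ℝ) : ℂ) * cv + ((-(s + i) : ℝ) : ℂ) * (2 * cu) / 2 =
        s * (cv - cu) + i * (cv - cu) by push_cast; ring,
      mexp_add, mexp_natCast_mul, hphase, one_pow, mul_one]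
  rw [mul_add 2 u cu, RS_add_of_im_eq_zero _ _ _ _ _ hcv, ThetaS_add hm, hTheta_sign,
    ← hphase_i]
  ring

lemma phiAddUV_add_half_intCast {m2 : ℤ} (hm2 : m2 ≠ 0) (sgn : ℂ) (s : ℝ) (τ u v : ℂ)
    {a b : ℤ} (hab : Even (a + b)) {cu cv : ℂ} (hcu : 2 * cu = a) (hcv : 2 * cv = b) :
    phiAddUV sgn ((m2 : ℝ) / 2) s τ (u + cu) (v + cv) =
      mexp (s * (cv - cu)) * phiAddUV (sgn * (-1) ^ (m2 * b)) ((m2 : ℝ) / 2) s τ u v := by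
  obtain ⟨d, hd⟩ := hab
  have hm : (m2 : ℝ) / 2 ≠ 0 := by simpa using hm2
  have hcu' : cu = a / 2 := by rw [← hcu]; ring
  have hcv' : cv = b / 2 := by rw [← hcv]; ring
  have hd' : (a : ℂ) + b = 2 * d := by exact_mod_cast hd.trans (two_mul d).symm
  have hcv_im : cv.im = 0 := by simp [hcv']
  have hphase : mexp (cv - cu) = 1 := by
    rw [show cv - cu = ((b - d : ℤ) : ℂ) by
      rw [hcu', hcv']; push_cast; linear_combination -hd' / 2, mexp_intCast]
  have hsign_int : 2 * ((m2 / 2 : ℝ) : ℂ) * cu - 2 * ((m2 / 2 : ℝ) : ℂ) * cv =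
      ((m2 * (a - d) : ℤ) : ℂ) := by
    rw [hcu', hcv']; push_cast; linear_combination -(m2 : ℂ) * hd' / 2
  have hsign := mexp_eq_of_sub_eq_intCast hsign_int
  have hsign_val : mexp (2 * ((m2 / 2 : ℝ) : ℂ) * cv) = (-1) ^ (m2 * b) := by
    rw [← mexp_intCast_div_two, hcv']
    push_cast
    ring_nf
  rw [phiAddUV_add hm sgn s τ u v hcv_im hphase hsign, hsign_val]

theorem stmt16_general (m2 : ℤ) (hm2 : 0 < m2) (s2 : ℤ) (sgn : ℂ)
    (τ u v : ℂ) :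
    (∀ a b : ℤ,
      phiAddUV sgn ((m2 : ℝ) / 2) ((s2 : ℝ) / 2) τ (u + a) (v + b) =
        mexp ((s2 : ℂ) / 2 * ((b : ℂ) - (a : ℂ))) *
          phiAddUV sgn ((m2 : ℝ) / 2) ((s2 : ℝ) / 2) τ u v) ∧
    (Even m2 → ∀ a2 b2 : ℤ, Even (a2 + b2) →
      phiAddUV sgn ((m2 : ℝ) / 2) ((s2 : ℝ) / 2) τ (u + (a2 : ℂ) / 2) (v + (b2 : ℂ) / 2) =
        mexp ((s2 : ℂ) / 2 * ((b2 : ℂ) / 2 - (a2 : ℂ) / 2)) *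
          phiAddUV sgn ((m2 : ℝ) / 2) ((s2 : ℝ) / 2) τ u v) ∧
    (¬ Even m2 → ∀ a b : ℤ,
      phiAddUV sgn ((m2 : ℝ) / 2) ((s2 : ℝ) / 2) τ (u + ((a : ℂ) + 1 / 2)) (v + ((b : ℂ) + 1 / 2)) =
        mexp ((s2 : ℂ) / 2 * (((b : ℂ) + 1 / 2) - ((a : ℂ) + 1 / 2))) *
          phiAddUV (-sgn) ((m2 : ℝ) / 2) ((s2 : ℝ) / 2) τ u v) := by
  have hs : (((s2 : ℝ) / 2 : ℝ) : ℂ) = (s2 : ℂ) / 2 := by push_cast; ring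
  refine ⟨fun a b => ?_, fun hm2_even a2 b2 hab => ?_, fun hm2_odd a b => ?_⟩
  · have h := phiAddUV_add_half_intCast hm2.ne' sgn ((s2 : ℝ) / 2) τ u v
      (a := 2 * a) (b := 2 * b) ⟨a + b, by ring⟩
      (cu := a) (cv := b) (by push_cast; ring) (by push_cast; ring)
    rwa [((even_two_mul b).mul_left m2).neg_one_zpow, mul_one, hs] at h
  · have h := phiAddUV_add_half_intCast hm2.ne' sgn ((s2 : ℝ) / 2) τ u v hab
      (cu := a2 / 2) (cv := b2 / 2) (by ring) (by ring)
    rwa [Even.neg_one_zpow (hm2_even.mul_right _), mul_one, hs] at h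
  · have hodd : Odd (m2 * (2 * b + 1)) :=
      (Int.not_even_iff_odd.mp hm2_odd).mul (odd_two_mul_add_one b)
    have h := phiAddUV_add_half_intCast hm2.ne' sgn ((s2 : ℝ) / 2) τ u v
      (a := 2 * a + 1) (b := 2 * b + 1) ⟨a + b + 1, by ring⟩
      (cu := a + 1 / 2) (cv := b + 1 / 2) (by push_cast; ring) (by push_cast; ring)
    rwa [Odd.neg_one_zpow hodd, mul_neg_one, hs] at h

/-- shift properties of `φ^{±[m;s]}_add`, `m = m2/2 ∈ (1/2)ℤ_{>0}`,
`s = s2/2 ∈ (1/2)ℤ`: (a) integer shifts; (b) for `m ∈ ℤ` (`m2` even), half-integer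
shifts `a = a2/2, b = b2/2` with `a + b ∈ ℤ` (`a2 + b2` even); (c) for `m ∉ ℤ`
(`m2` odd), shifts by `a + 1/2, b + 1/2 ∈ 1/2 + ℤ`, with the sign flipped. -/
theorem stmt16 (m2 : ℤ) (hm2 : 0 < m2) (s2 : ℤ) (sgn : ℂ) (hsgn : sgn = 1 ∨ sgn = -1)
    (τ u v : ℂ) (hτ : 0 < τ.im) :
    (∀ a b : ℤ,
      phiAddUV sgn ((m2 : ℝ) / 2) ((s2 : ℝ) / 2) τ (u + a) (v + b) =
        mexp ((s2 : ℂ) / 2 * ((b : ℂ) - (a : ℂ))) *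
          phiAddUV sgn ((m2 : ℝ) / 2) ((s2 : ℝ) / 2) τ u v) ∧
    (Even m2 → ∀ a2 b2 : ℤ, Even (a2 + b2) →
      phiAddUV sgn ((m2 : ℝ) / 2) ((s2 : ℝ) / 2) τ (u + (a2 : ℂ) / 2) (v + (b2 : ℂ) / 2) =
        mexp ((s2 : ℂ) / 2 * ((b2 : ℂ) / 2 - (a2 : ℂ) / 2)) *
          phiAddUV sgn ((m2 : ℝ) / 2) ((s2 : ℝ) / 2) τ u v) ∧
    (¬ Even m2 → ∀ a b : ℤ,
      phiAddUV sgn ((m2 : ℝ) / 2) ((s2 : ℝ) / 2) τ (u + ((a : ℂ) + 1 / 2)) (v + ((b : ℂ) + 1 / 2)) =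
        mexp ((s2 : ℂ) / 2 * (((b : ℂ) + 1 / 2) - ((a : ℂ) + 1 / 2))) *
          phiAddUV (-sgn) ((m2 : ℝ) / 2) ((s2 : ℝ) / 2) τ u v) :=
  stmt16_general m2 hm2 s2 sgn τ u v
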